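/- Let σ ≥ 2. Then for every z ∈ (0,1) one has the exact identity ‖g_z‖_{L²(ℝ)} = (1−z²)^{1/(2σ) − 1/4} · ‖h_z‖_{L²(ℝ)}, and there exists a constant C > 0 depending only on σ (not on z) such that ‖g_z'‖_{L²(ℝ)} ≤ C · (1−z²)^{1/(2σ) + 1/4}. -/

import Mathlib

open MeasureTheory

/-- The rescaled profile `h_z(x) = (cosh(2σx) + z)^{−1/(2σ)}`. -/
noncomputable def hProf (σ z : ℝ) (x : ℝ) : ℝ :=
  (Real.cosh (2 * σ * x) + z) ^ (-(1 / (2 * σ)))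

/-- The renormalized profile `g_z`. -/
noncomputable def gProf (σ z : ℝ) (x : ℝ) : ℂ :=
  (((1 - z ^ 2) ^ (1 / (2 * σ)) * hProf σ z (Real.sqrt (1 - z ^ 2) * x) : ℝ) : ℂ) *
    Complex.exp (-Complex.I * ((Real.sqrt (1 - z ^ 2) *
      ∫ y in Set.Iic (Real.sqrt (1 - z ^ 2) * x), hProf σ z y ^ (2 * σ) : ℝ) : ℂ))

/-!
Since `|e^{-iθ}| = 1`, `|g_z(x)| = (1-z²)^{1/(2σ)} h_z(√(1-z²) x)` and the `L²` identity is the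
substitution `y = √(1-z²) x`. Writing `g_z = a e^{-iθ}` with `a, θ` real gives
`|g_z'|² = a'² + (a θ')²`. As `h_z' = -(sinh/(cosh + z)) h_z`, we have `|h_z'| ≤ h_z`, and
`h_z^{2σ} ≤ 1`, so `|g_z'(x)|² ≤ 2 (1-z²)^{1/σ+1} h_z(√(1-z²) x)²`. Finally `h_z ≤ h_0` and
`h_0(x)² ≤ 2^{1/σ} e^{-2|x|}`, so the same substitution yields the bound with `C² = 2‖h_0‖²`.
-/

open Real Set

lemma integrable_exp_neg_abs : Integrable fun x : ℝ => exp (-|x|) := by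
  refine Integrable.of_integral_ne_zero ?_
  rw [integral_comp_abs (f := fun x => exp (-x)), integral_exp_neg_Ioi_zero]
  norm_num

lemma cosh_add_pos {z : ℝ} (hz : 0 ≤ z) (t : ℝ) : 0 < cosh t + z := by
  linarith [cosh_pos t]

lemma rpow_neg_cosh_add_le {a z : ℝ} (ha : 0 ≤ a) (hz : 0 ≤ z) (t : ℝ) :
    (cosh t + z) ^ (-a) ≤ 2 ^ a * exp (-|a * t|) := by
  have hpos := cosh_add_pos hz t
  have hexp : exp |t| ≤ 2 * (cosh t + z) := by
    rw [← cosh_abs, cosh_eq]; linarith [exp_pos (-|t|)]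
  have hinv : (cosh t + z)⁻¹ ≤ 2 * exp (-|t|) := by
    rw [exp_neg, inv_le_comm₀ hpos (by positivity), mul_inv, inv_inv]
    linarith
  calc (cosh t + z) ^ (-a) = ((cosh t + z)⁻¹) ^ a := by
        rw [rpow_neg hpos.le, inv_rpow hpos.le]
    _ ≤ (2 * exp (-|t|)) ^ a := rpow_le_rpow (by positivity) hinv ha
    _ = 2 ^ a * exp (-|a * t|) := by
        rw [mul_rpow zero_le_two (exp_pos _).le, ← exp_mul, abs_mul, abs_of_nonneg ha]
        ring_nf

lemma integrable_rpow_neg_cosh_mul_add {a c z : ℝ} (ha : 0 < a) (hc : c ≠ 0) (hz : 0 ≤ z) :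
    Integrable fun x => (cosh (c * x) + z) ^ (-a) := by
  refine Integrable.mono'
    ((integrable_exp_neg_abs.comp_mul_left' (mul_ne_zero ha.ne' hc)).const_mul (2 ^ a))
    (Measurable.aestronglyMeasurable (by fun_prop)) (Filter.Eventually.of_forall fun x => ?_)
  rw [norm_of_nonneg (rpow_nonneg (cosh_add_pos hz _).le _), mul_assoc]
  exact rpow_neg_cosh_add_le ha.le hz _

section hProf

variable {σ z : ℝ}

lemma hProf_pos (hz : 0 ≤ z) (x : ℝ) : 0 < hProf σ z x :=
  rpow_pos_of_pos (cosh_add_pos hz _) _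

lemma continuous_hProf (hz : 0 ≤ z) : Continuous (hProf σ z) :=
  (by fun_prop : Continuous fun x => cosh (2 * σ * x) + z).rpow_const
    fun x => Or.inl (cosh_add_pos hz _).ne'

lemma hProf_sq (hz : 0 ≤ z) (x : ℝ) :
    hProf σ z x ^ 2 = (cosh (2 * σ * x) + z) ^ (-(1 / σ)) := by
  rw [hProf, ← rpow_mul_natCast (cosh_add_pos hz _).le]
  ring_nf

lemma hProf_rpow_two_mul (hσ : σ ≠ 0) (hz : 0 ≤ z) (x : ℝ) :
    hProf σ z x ^ (2 * σ) = (cosh (2 * σ * x) + z) ^ (-1 : ℝ) := by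
  rw [hProf, ← rpow_mul (cosh_add_pos hz _).le]
  field_simp

lemma hProf_rpow_two_mul_le_one (hσ : σ ≠ 0) (hz : 0 ≤ z) (x : ℝ) :
    hProf σ z x ^ (2 * σ) ≤ 1 := by
  rw [hProf_rpow_two_mul hσ hz, rpow_neg_one]
  exact inv_le_one_of_one_le₀ (by linarith [one_le_cosh (2 * σ * x)])

lemma hProf_le_hProf_zero (hσ : 0 < σ) (hz : 0 ≤ z) (x : ℝ) : hProf σ z x ≤ hProf σ 0 x :=
  rpow_le_rpow_of_nonpos (by simpa using cosh_pos _) (by linarith)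
    (neg_nonpos.mpr (by positivity))

lemma integrable_hProf_sq (hσ : 0 < σ) (hz : 0 ≤ z) : Integrable fun x => hProf σ z x ^ 2 := by
  simp_rw [hProf_sq hz]
  exact integrable_rpow_neg_cosh_mul_add (by positivity) (by positivity) hz

lemma integrable_hProf_rpow_two_mul (hσ : 0 < σ) (hz : 0 ≤ z) :
    Integrable fun x => hProf σ z x ^ (2 * σ) := by
  simp_rw [hProf_rpow_two_mul hσ.ne' hz]
  exact integrable_rpow_neg_cosh_mul_add one_pos (by positivity) hz

lemma hasDerivAt_hProf (hσ : σ ≠ 0) (hz : 0 ≤ z) (x : ℝ) :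
    HasDerivAt (hProf σ z) (-(sinh (2 * σ * x) / (cosh (2 * σ * x) + z)) * hProf σ z x) x := by
  have hpos := cosh_add_pos hz (2 * σ * x)
  have hinner : HasDerivAt (fun y => cosh (2 * σ * y) + z) (sinh (2 * σ * x) * (2 * σ)) x := by
    simpa using (((hasDerivAt_id x).const_mul (2 * σ)).cosh).add_const z
  refine (hinner.rpow_const (p := -(1 / (2 * σ))) (Or.inl hpos.ne')).congr_deriv ?_
  rw [hProf, rpow_sub_one hpos.ne']
  field_simp

lemma abs_deriv_hProf_le (hσ : σ ≠ 0) (hz : 0 ≤ z) (x : ℝ) :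
    |deriv (hProf σ z) x| ≤ hProf σ z x := by
  have hpos := cosh_add_pos hz (2 * σ * x)
  rw [(hasDerivAt_hProf hσ hz x).deriv, abs_mul, abs_neg, abs_div, abs_of_pos hpos,
    abs_of_pos (hProf_pos hz x)]
  refine mul_le_of_le_one_left (hProf_pos hz x).le ((div_le_one hpos).mpr ?_)
  exact abs_le.mpr ⟨by linarith [cosh_add_sinh (2 * σ * x), exp_pos (2 * σ * x)],
    by linarith [cosh_sub_sinh (2 * σ * x), exp_pos (-(2 * σ * x))]⟩

end hProf

lemma hasDerivAt_setIntegral_Iic {E : Type*} [NormedAddCommGroup E] [NormedSpace ℝ E]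
    [CompleteSpace E] {f : ℝ → E} (hf : Continuous f) (hfi : Integrable f) (u : ℝ) :
    HasDerivAt (fun v => ∫ y in Iic v, f y) (f u) u := by
  have hsplit :
      (fun v => ∫ y in Iic v, f y) = fun v => (∫ y in Iic 0, f y) + ∫ y in (0)..v, f y := by
    funext v
    rw [← intervalIntegral.integral_Iic_sub_Iic hfi.integrableOn hfi.integrableOn]
    abel
  rw [hsplit]
  exact (intervalIntegral.integral_hasDerivAt_right hfi.intervalIntegrable
    (hf.stronglyMeasurableAtFilter _ _) hf.continuousAt).const_add _

open Complex in
lemma norm_exp_neg_I_mul (θ : ℝ) : ‖cexp (-I * θ)‖ = 1 := by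
  rw [neg_mul, ← mul_neg, ← ofReal_neg, norm_exp_I_mul_ofReal]

open Complex in
lemma norm_deriv_ofReal_mul_exp_neg_I_mul_sq {a θ : ℝ → ℝ} {a' θ' x : ℝ}
    (ha : HasDerivAt a a' x) (hθ : HasDerivAt θ θ' x) :
    ‖deriv (fun t => (a t : ℂ) * cexp (-I * θ t)) x‖ ^ 2 = a' ^ 2 + (a x * θ') ^ 2 := by
  have hderiv := ha.ofReal_comp.fun_mul ((hθ.ofReal_comp.const_mul (-I)).cexp)
  have hform : (a' : ℂ) * cexp (-I * θ x) + a x * (cexp (-I * θ x) * (-I * θ')) =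
      ((a' : ℂ) + ((-(a x * θ') : ℝ) : ℂ) * I) * cexp (-I * θ x) := by
    push_cast; ring
  rw [hderiv.deriv, hform, norm_mul, norm_exp_neg_I_mul, mul_one, norm_add_mul_I,
    sq_sqrt (by positivity), neg_sq]

lemma integral_comp_sqrt_mul {w : ℝ} (hw : 0 < w) (f : ℝ → ℝ) :
    ∫ x, f (√w * x) = w ^ (-(1 / 2) : ℝ) * ∫ x, f x := by
  rw [Measure.integral_comp_mul_left, abs_of_pos (inv_pos.2 (sqrt_pos.2 hw)), smul_eq_mul,
    sqrt_eq_rpow, rpow_neg hw.le]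

lemma sqrt_rpow_mul {w : ℝ} (hw : 0 ≤ w) (q c : ℝ) : √(w ^ q * c) = w ^ (q / 2) * √c := by
  rw [sqrt_mul (rpow_nonneg hw q), sqrt_eq_rpow, ← rpow_mul hw]
  ring_nf

section gProf

variable {σ z : ℝ}

lemma norm_gProf_sq (x : ℝ) :
    ‖gProf σ z x‖ ^ 2 =
      ((1 - z ^ 2) ^ (1 / (2 * σ))) ^ 2 * hProf σ z (√(1 - z ^ 2) * x) ^ 2 := by
  rw [gProf, norm_mul, norm_exp_neg_I_mul, mul_one, Complex.norm_real, Real.norm_eq_abs, sq_abs,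
    mul_pow]

lemma norm_deriv_gProf_sq_le (hσ : 0 < σ) (hz0 : 0 ≤ z) (hz1 : z ≤ 1) (x : ℝ) :
    ‖deriv (gProf σ z) x‖ ^ 2 ≤
      2 * ((1 - z ^ 2) ^ (1 / (2 * σ))) ^ 2 * (1 - z ^ 2) * hProf σ 0 (√(1 - z ^ 2) * x) ^ 2 := by
  set A := (1 - z ^ 2) ^ (1 / (2 * σ))
  set s := √(1 - z ^ 2)
  have hs2 : s ^ 2 = 1 - z ^ 2 := sq_sqrt (by nlinarith)
  have hs : HasDerivAt (fun t => s * t) s x := by simpa using (hasDerivAt_id x).const_mul s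
  have hamp : HasDerivAt (fun t => A * hProf σ z (s * t))
      (A * (deriv (hProf σ z) (s * x) * s)) x :=
    ((hasDerivAt_hProf hσ.ne' hz0 _).differentiableAt.hasDerivAt.comp x hs).const_mul A
  have hphase : HasDerivAt (fun t => s * ∫ y in Iic (s * t), hProf σ z y ^ (2 * σ))
      (s * (hProf σ z (s * x) ^ (2 * σ) * s)) x :=
    ((hasDerivAt_setIntegral_Iic
      ((continuous_hProf hz0).rpow_const fun _ => Or.inl (hProf_pos hz0 _).ne')
      (integrable_hProf_rpow_two_mul hσ hz0) _).comp x hs).const_mul s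
  have hnorm : ‖deriv (gProf σ z) x‖ ^ 2 = _ :=
    norm_deriv_ofReal_mul_exp_neg_I_mul_sq hamp hphase
  rw [hnorm]
  set p := hProf σ z (s * x)
  set q := p ^ (2 * σ)
  have hd : deriv (hProf σ z) (s * x) ^ 2 ≤ p ^ 2 := by
    rw [← sq_abs]
    exact pow_le_pow_left₀ (abs_nonneg _) (abs_deriv_hProf_le hσ.ne' hz0 _) 2
  have hq : (s * q) ^ 2 ≤ 1 := by
    rw [mul_pow]
    exact mul_le_one₀ (by nlinarith) (sq_nonneg q)
      (pow_le_one₀ (rpow_nonneg (hProf_pos hz0 _).le _) (hProf_rpow_two_mul_le_one hσ.ne' hz0 _))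
  have hp : p ^ 2 ≤ hProf σ 0 (s * x) ^ 2 :=
    pow_le_pow_left₀ (hProf_pos hz0 _).le (hProf_le_hProf_zero hσ hz0 _) 2
  calc (A * (deriv (hProf σ z) (s * x) * s)) ^ 2 + (A * p * (s * (q * s))) ^ 2
      = A ^ 2 * s ^ 2 * (deriv (hProf σ z) (s * x) ^ 2 + p ^ 2 * (s * q) ^ 2) := by ring
    _ ≤ A ^ 2 * s ^ 2 * (p ^ 2 + p ^ 2 * 1) := by gcongr
    _ ≤ 2 * A ^ 2 * s ^ 2 * hProf σ 0 (s * x) ^ 2 := by nlinarith [sq_nonneg (A * s)]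
    _ = _ := by rw [hs2]

lemma integral_hProf_sq_pos (hσ : 0 < σ) (hz : 0 ≤ z) : 0 < ∫ x, hProf σ z x ^ 2 :=
  integral_pos_of_integrable_nonneg_nonzero (x := 0) ((continuous_hProf hz).pow 2)
    (integrable_hProf_sq hσ hz) (fun _ => sq_nonneg _) (pow_ne_zero 2 (hProf_pos hz 0).ne')

lemma integral_norm_gProf_sq (hz : z ^ 2 < 1) :
    ∫ x, ‖gProf σ z x‖ ^ 2 = (1 - z ^ 2) ^ (1 / σ - 1 / 2) * ∫ x, hProf σ z x ^ 2 := by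
  have hw : 0 < 1 - z ^ 2 := by linarith
  simp_rw [norm_gProf_sq]
  rw [integral_const_mul, integral_comp_sqrt_mul hw (fun x => hProf σ z x ^ 2), ← mul_assoc,
    ← rpow_mul_natCast hw.le, ← rpow_add hw]
  ring_nf

lemma integral_norm_deriv_gProf_sq_le (hσ : 0 < σ) (hz0 : 0 ≤ z) (hz1 : z < 1) :
    ∫ x, ‖deriv (gProf σ z) x‖ ^ 2 ≤
      (1 - z ^ 2) ^ (1 / σ + 1 / 2) * (2 * ∫ x, hProf σ 0 x ^ 2) := by
  have hw : 0 < 1 - z ^ 2 := by nlinarith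
  have hexp : (1 - z ^ 2) ^ (1 / σ + 1 / 2) = ((1 - z ^ 2) ^ (1 / (2 * σ))) ^ 2 *
      (1 - z ^ 2) * (1 - z ^ 2) ^ (-(1 / 2) : ℝ) := by
    rw [← rpow_mul_natCast hw.le, ← rpow_add_one hw.ne', ← rpow_add hw]
    ring_nf
  calc ∫ x, ‖deriv (gProf σ z) x‖ ^ 2
      ≤ ∫ x, 2 * ((1 - z ^ 2) ^ (1 / (2 * σ))) ^ 2 * (1 - z ^ 2) *
          hProf σ 0 (√(1 - z ^ 2) * x) ^ 2 :=
        integral_mono_of_nonneg (Filter.Eventually.of_forall fun x => sq_nonneg _)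
          (((integrable_hProf_sq hσ le_rfl).comp_mul_left' (sqrt_pos.2 hw).ne').const_mul _)
          (Filter.Eventually.of_forall (norm_deriv_gProf_sq_le hσ hz0 hz1.le))
    _ = (1 - z ^ 2) ^ (1 / σ + 1 / 2) * (2 * ∫ x, hProf σ 0 x ^ 2) := by
        rw [integral_const_mul, integral_comp_sqrt_mul hw (fun x => hProf σ 0 x ^ 2), hexp]
        ring

end gProf

/-- For `σ ≥ 2`: the exact identity `‖g_z‖_{L²} = (1−z²)^{1/(2σ)−1/4}‖h_z‖_{L²}`, and a
`z`-uniform bound `‖g_z'‖_{L²} ≤ C (1−z²)^{1/(2σ)+1/4}`. -/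
theorem gProf_L2_identity_and_deriv_bound (σ : ℝ) (hσ : 2 ≤ σ) :
    (∀ z ∈ Set.Ioo (0 : ℝ) 1,
      Real.sqrt (∫ x : ℝ, ‖gProf σ z x‖ ^ 2) =
        (1 - z ^ 2) ^ (1 / (2 * σ) - 1 / 4) * Real.sqrt (∫ x : ℝ, hProf σ z x ^ 2)) ∧
    ∃ C : ℝ, 0 < C ∧ ∀ z ∈ Set.Ioo (0 : ℝ) 1,
      Real.sqrt (∫ x : ℝ, ‖deriv (gProf σ z) x‖ ^ 2) ≤
        C * (1 - z ^ 2) ^ (1 / (2 * σ) + 1 / 4) := by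
  have hσ0 : 0 < σ := by linarith
  have hK := integral_hProf_sq_pos hσ0 le_rfl
  refine ⟨fun z ⟨hz0, hz1⟩ => ?_, √(2 * ∫ x, hProf σ 0 x ^ 2), by positivity,
    fun z ⟨hz0, hz1⟩ => ?_⟩
  · rw [integral_norm_gProf_sq (by nlinarith), sqrt_rpow_mul (by nlinarith)]
    ring_nf
  · calc √(∫ x, ‖deriv (gProf σ z) x‖ ^ 2)
        ≤ √((1 - z ^ 2) ^ (1 / σ + 1 / 2) * (2 * ∫ x, hProf σ 0 x ^ 2)) :=
          sqrt_le_sqrt (integral_norm_deriv_gProf_sq_le hσ0 hz0.le hz1)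
      _ = √(2 * ∫ x, hProf σ 0 x ^ 2) * (1 - z ^ 2) ^ (1 / (2 * σ) + 1 / 4) := by
          rw [sqrt_rpow_mul (by nlinarith), mul_comm]
          ring_nf
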